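/- Let Λ ⊂ {1,…,N} and let x̃ ∈ ℝ^N with supp(x̃) ∩ Λ = ∅, and set S = supp(x̃) and h = A_Λᵀ A_Λ x̃. If the M×N real matrix Φ satisfies the RIP of order ‖x̃‖₀ + |Λ| with isometry constant δ < 1/2, then ‖h|_S‖₂ ≥ ((1−2δ)/(1−δ))‖x̃‖₂. -/

import Mathlib

/-!
Write `y = Φ x̃` and `p = P_Λ y`. Since `p` lies in the span of the columns indexed by `Λ`,
`p = Φ z` with `supp z ⊆ Λ`; moreover `A_Λ x̃ = y - p`, so `⟨h, x̃⟩ = ‖y - p‖² = ‖y‖² - ‖p‖²`.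
As `z` and `x̃` have disjoint supports, the RIP gives `‖p‖² = ⟨Φ z, Φ x̃⟩ ≤ δ ‖z‖ ‖x̃‖` and
`(1 - δ) ‖z‖² ≤ ‖p‖²`, hence `(1 - δ) ‖p‖² ≤ δ² ‖x̃‖²`. Together with `‖y‖² ≥ (1 - δ) ‖x̃‖²`
this yields `⟨h|_S, x̃⟩ = ⟨h, x̃⟩ ≥ (1 - 2δ)/(1 - δ) ‖x̃‖²`, and Cauchy–Schwarz concludes.
-/

noncomputable section

namespace OMP

open Matrix Finset

/-- The support of a vector, as a `Finset`. -/
def supp {n : ℕ} (x : Fin n → ℝ) : Finset (Fin n) :=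
  Finset.univ.filter fun j => x j ≠ 0

/-- The Euclidean (ℓ²) norm of a vector. -/
def l2 {n : ℕ} (x : Fin n → ℝ) : ℝ := Real.sqrt (∑ j, x j ^ 2)

/-- The ℓ^∞ norm of a vector. -/
def linf {n : ℕ} (x : Fin n → ℝ) : ℝ := ⨆ j, |x j|

/-- The standard inner product of two vectors. -/
def dotp {n : ℕ} (x y : Fin n → ℝ) : ℝ := ∑ j, x j * y j

/-- The restriction of a vector to a set of indices (zero elsewhere). -/
def restr {n : ℕ} (Γ : Finset (Fin n)) (x : Fin n → ℝ) : Fin n → ℝ :=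
  fun j => if j ∈ Γ then x j else 0

/-- The restricted isometry property of order `K` with isometry constant `δ`. -/
def RIP {M N : ℕ} (K : ℕ) (Φ : Matrix (Fin M) (Fin N) ℝ) (δ : ℝ) : Prop :=
  0 < δ ∧ δ < 1 ∧ ∀ x : Fin N → ℝ, (supp x).card ≤ K →
    (1 - δ) * l2 x ^ 2 ≤ l2 (Φ.mulVec x) ^ 2 ∧
      l2 (Φ.mulVec x) ^ 2 ≤ (1 + δ) * l2 x ^ 2

/-- The span of the columns of `Φ` indexed by `Λ`, as a submodule of Euclidean space. -/
def colSpan {M N : ℕ} (Φ : Matrix (Fin M) (Fin N) ℝ) (Λ : Finset (Fin N)) :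
    Submodule ℝ (EuclideanSpace ℝ (Fin M)) :=
  Submodule.span ℝ ((fun j => (WithLp.equiv 2 (Fin M → ℝ)).symm fun i => Φ i j) '' (Λ : Set (Fin N)))

/-- Orthogonal projection `P_Λ` onto the span of the columns of `Φ` indexed by `Λ`. -/
def projCol {M N : ℕ} (Φ : Matrix (Fin M) (Fin N) ℝ) (Λ : Finset (Fin N))
    (v : Fin M → ℝ) : Fin M → ℝ :=
  WithLp.equiv 2 (Fin M → ℝ)
    (Submodule.orthogonalProjectionOnto (colSpan Φ Λ) ((WithLp.equiv 2 (Fin M → ℝ)).symm v) : EuclideanSpace ℝ (Fin M))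

/-- The matrix `A_Λ = (I - P_Λ) Φ`: the columns of `Φ` orthogonalized against `colSpan Φ Λ`. -/
def Amat {M N : ℕ} (Φ : Matrix (Fin M) (Fin N) ℝ) (Λ : Finset (Fin N)) :
    Matrix (Fin M) (Fin N) ℝ :=
  Matrix.of fun i j => Φ i j - projCol Φ Λ (fun i' => Φ i' j) i

open scoped RealInnerProductSpace

section Euclidean

variable {n : ℕ}

lemma l2_eq_norm (x : Fin n → ℝ) : l2 x = ‖WithLp.toLp 2 x‖ := by
  simp [l2, EuclideanSpace.norm_eq]

lemma dotp_eq_inner (x y : Fin n → ℝ) : dotp x y = ⟪WithLp.toLp 2 x, WithLp.toLp 2 y⟫ := by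
  simp [dotp, EuclideanSpace.inner_toLp_toLp, dotProduct, mul_comm]

lemma l2_nonneg (x : Fin n → ℝ) : 0 ≤ l2 x := Real.sqrt_nonneg _

lemma l2_eq_zero {x : Fin n → ℝ} : l2 x = 0 ↔ x = 0 := by
  rw [l2_eq_norm, norm_eq_zero, WithLp.toLp_eq_zero]

lemma dotp_comm (x y : Fin n → ℝ) : dotp x y = dotp y x := by
  rw [dotp_eq_inner, dotp_eq_inner, real_inner_comm]

lemma dotp_self (x : Fin n → ℝ) : dotp x x = l2 x ^ 2 := by
  rw [dotp_eq_inner, l2_eq_norm, real_inner_self_eq_norm_sq]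

lemma dotp_le_l2_mul_l2 (x y : Fin n → ℝ) : dotp x y ≤ l2 x * l2 y := by
  rw [dotp_eq_inner, l2_eq_norm, l2_eq_norm]
  exact real_inner_le_norm _ _

lemma l2_add_sq (x y : Fin n → ℝ) : l2 (x + y) ^ 2 = l2 x ^ 2 + 2 * dotp x y + l2 y ^ 2 := by
  simp only [l2_eq_norm, dotp_eq_inner, WithLp.toLp_add, norm_add_sq_real]

lemma l2_sub_sq (x y : Fin n → ℝ) : l2 (x - y) ^ 2 = l2 x ^ 2 - 2 * dotp x y + l2 y ^ 2 := by
  simp only [l2_eq_norm, dotp_eq_inner, WithLp.toLp_sub, norm_sub_sq_real]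

lemma l2_smul (c : ℝ) (x : Fin n → ℝ) : l2 (c • x) = |c| * l2 x := by
  simp only [l2_eq_norm, WithLp.toLp_smul, norm_smul, Real.norm_eq_abs]

lemma dotp_smul_left (c : ℝ) (x y : Fin n → ℝ) : dotp (c • x) y = c * dotp x y := by
  simp only [dotp_eq_inner, WithLp.toLp_smul, real_inner_smul_left]

lemma dotp_smul_right (c : ℝ) (x y : Fin n → ℝ) : dotp x (c • y) = c * dotp x y := by
  simp only [dotp_eq_inner, WithLp.toLp_smul, real_inner_smul_right]

lemma mem_supp {x : Fin n → ℝ} {j : Fin n} : j ∈ supp x ↔ x j ≠ 0 := by simp [supp]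

lemma supp_subset_iff {x : Fin n → ℝ} {T : Finset (Fin n)} :
    supp x ⊆ T ↔ ∀ j ∉ T, x j = 0 := by
  simp only [Finset.subset_iff, mem_supp]
  exact ⟨fun h j hj => by_contra fun hx => hj (h hx), fun h j hx => by_contra fun hj => hx (h j hj)⟩

lemma dotp_eq_zero_of_disjoint {x y : Fin n → ℝ} (h : Disjoint (supp x) (supp y)) :
    dotp x y = 0 := by
  refine Finset.sum_eq_zero fun j _ => ?_
  by_cases hx : x j = 0
  · rw [hx, zero_mul]
  · have hy : y j = 0 :=
      by_contra fun hy => Finset.disjoint_left.1 h (mem_supp.2 hx) (mem_supp.2 hy)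
    rw [hy, mul_zero]

lemma dotp_restr_supp (y x : Fin n → ℝ) : dotp (restr (supp x) y) x = dotp y x := by
  refine Finset.sum_congr rfl fun j _ => ?_
  by_cases hj : j ∈ supp x
  · simp [restr, hj]
  · simp [restr, hj, not_not.1 (mem_supp.not.1 hj)]

end Euclidean

section RIP

variable {M N K : ℕ} {Φ : Matrix (Fin M) (Fin N) ℝ} {δ : ℝ} {T : Finset (Fin N)}
  {u v : Fin N → ℝ}

lemma RIP.dotp_mulVec_le_add (hΦ : RIP K Φ δ) (hT : T.card ≤ K) (hu : supp u ⊆ T)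
    (hv : supp v ⊆ T) :
    2 * dotp (Φ *ᵥ u) (Φ *ᵥ v) ≤ 2 * dotp u v + δ * (l2 u ^ 2 + l2 v ^ 2) := by
  have hcard {w : Fin N → ℝ} (hw : ∀ j ∉ T, w j = 0) : (supp w).card ≤ K :=
    (Finset.card_le_card (supp_subset_iff.2 hw)).trans hT
  have hu' := supp_subset_iff.1 hu
  have hv' := supp_subset_iff.1 hv
  have hadd := (hΦ.2.2 (u + v) (hcard fun j hj => by simp [hu' j hj, hv' j hj])).2
  have hsub := (hΦ.2.2 (u - v) (hcard fun j hj => by simp [hu' j hj, hv' j hj])).1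
  rw [mulVec_add, l2_add_sq, l2_add_sq] at hadd
  rw [mulVec_sub, l2_sub_sq, l2_sub_sq] at hsub
  linear_combination (hadd + hsub) / 2

lemma RIP.dotp_mulVec_le (hΦ : RIP K Φ δ) (hT : T.card ≤ K) (hu : supp u ⊆ T)
    (hv : supp v ⊆ T) :
    dotp (Φ *ᵥ u) (Φ *ᵥ v) ≤ dotp u v + δ * (l2 u * l2 v) := by
  rcases (l2_nonneg u).eq_or_lt with hu0 | hu0
  · obtain rfl := l2_eq_zero.1 hu0.symm
    simp [dotp, ← hu0]
  rcases (l2_nonneg v).eq_or_lt with hv0 | hv0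
  · obtain rfl := l2_eq_zero.1 hv0.symm
    simp [dotp, ← hv0]
  have hsmul (c : ℝ) {w : Fin N → ℝ} (hw : supp w ⊆ T) : supp (c • w) ⊆ T :=
    supp_subset_iff.2 fun j hj => by simp [supp_subset_iff.1 hw j hj]
  -- rescale `u` and `v` to the same length, where the symmetric bound is sharp
  have key := hΦ.dotp_mulVec_le_add hT (hsmul (l2 v) hu) (hsmul (l2 u) hv)
  rw [mulVec_smul, mulVec_smul, dotp_smul_left, dotp_smul_right, dotp_smul_left,
    dotp_smul_right, l2_smul, l2_smul, abs_of_pos hu0, abs_of_pos hv0] at key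
  have hpos : 0 < 2 * (l2 u * l2 v) := by positivity
  refine le_of_mul_le_mul_left ?_ hpos
  linear_combination key

end RIP

section Projection

variable {M N : ℕ} (Φ : Matrix (Fin M) (Fin N) ℝ) (Λ : Finset (Fin N))

lemma toLp_projCol (v : Fin M → ℝ) :
    WithLp.toLp 2 (projCol Φ Λ v) = (colSpan Φ Λ).starProjection (WithLp.toLp 2 v) := rfl

lemma exists_mulVec_eq_projCol (v : Fin M → ℝ) :
    ∃ z, supp z ⊆ Λ ∧ Φ *ᵥ z = projCol Φ Λ v := by
  obtain ⟨c, hc⟩ := Submodule.mem_span_image_finset_iff_exists_fun' ℝ |>.1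
    ((colSpan Φ Λ).starProjection_apply_mem (WithLp.toLp 2 v))
  refine ⟨restr Λ c, supp_subset_iff.2 fun j hj => if_neg hj, ?_⟩
  apply WithLp.toLp_injective 2
  rw [toLp_projCol, ← hc]
  ext i
  simp [restr, mulVec, dotProduct, Finset.sum_apply, mul_comm]

lemma l2_projCol_sq (v : Fin M → ℝ) : l2 (projCol Φ Λ v) ^ 2 = dotp (projCol Φ Λ v) v := by
  rw [l2_eq_norm, dotp_eq_inner, toLp_projCol]
  exact ((colSpan Φ Λ).re_inner_starProjection_eq_normSq _).symm

lemma l2_sub_projCol_sq (v : Fin M → ℝ) :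
    l2 (v - projCol Φ Λ v) ^ 2 = l2 v ^ 2 - l2 (projCol Φ Λ v) ^ 2 := by
  rw [l2_sub_sq, dotp_comm, ← l2_projCol_sq]
  ring

lemma projCol_mulVec (x : Fin N → ℝ) :
    projCol Φ Λ (Φ *ᵥ x) = ∑ j, x j • projCol Φ Λ (fun i => Φ i j) := by
  apply WithLp.toLp_injective 2
  have hcols : WithLp.toLp 2 (Φ *ᵥ x) = ∑ j, x j • WithLp.toLp 2 (fun i => Φ i j) := by
    ext i
    simp [mulVec, dotProduct, mul_comm]
  simp only [toLp_projCol, hcols, map_sum, map_smul, WithLp.toLp_sum, WithLp.toLp_smul]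

lemma Amat_mulVec (x : Fin N → ℝ) : Amat Φ Λ *ᵥ x = Φ *ᵥ x - projCol Φ Λ (Φ *ᵥ x) := by
  ext i
  simp [Amat, mulVec, dotProduct, projCol_mulVec, Finset.sum_apply, mul_sub, mul_comm]

lemma dotp_transpose_mulVec (A : Matrix (Fin M) (Fin N) ℝ) (w : Fin M → ℝ) (x : Fin N → ℝ) :
    dotp (Aᵀ *ᵥ w) x = dotp w (A *ᵥ x) := by
  change (Aᵀ *ᵥ w) ⬝ᵥ x = w ⬝ᵥ (A *ᵥ x)
  rw [mulVec_transpose, dotProduct_mulVec]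

end Projection

section Residual

variable {M N : ℕ} {Φ : Matrix (Fin M) (Fin N) ℝ} {δ : ℝ} {Λ : Finset (Fin N)}
  {x : Fin N → ℝ}

lemma l2_projCol_mulVec_sq_le (hΦ : RIP ((supp x).card + Λ.card) Φ δ)
    (hdisj : Disjoint (supp x) Λ) :
    (1 - δ) * l2 (projCol Φ Λ (Φ *ᵥ x)) ^ 2 ≤ δ ^ 2 * l2 x ^ 2 := by
  obtain ⟨z, hzΛ, hz⟩ := exists_mulVec_eq_projCol Φ Λ (Φ *ᵥ x)
  have hT : (Λ ∪ supp x).card ≤ (supp x).card + Λ.card := by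
    rw [add_comm]; exact Finset.card_union_le _ _
  have hzx : dotp z x = 0 :=
    dotp_eq_zero_of_disjoint (Finset.disjoint_of_subset_left hzΛ hdisj.symm)
  have hupper : l2 (projCol Φ Λ (Φ *ᵥ x)) ^ 2 ≤ δ * (l2 z * l2 x) := by
    rw [l2_projCol_sq, ← hz]
    simpa [hzx] using
      hΦ.dotp_mulVec_le hT (Finset.subset_union_left.trans' hzΛ) Finset.subset_union_right
  have hlower : (1 - δ) * l2 z ^ 2 ≤ l2 (projCol Φ Λ (Φ *ᵥ x)) ^ 2 :=
    hz ▸ (hΦ.2.2 z ((Finset.card_le_card hzΛ).trans (Nat.le_add_left _ _))).1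
  have hz_bound : (1 - δ) * l2 z ≤ δ * l2 x := by
    rcases (l2_nonneg z).eq_or_lt with h0 | h0
    · rw [← h0, mul_zero]
      exact mul_nonneg hΦ.1.le (l2_nonneg x)
    · refine le_of_mul_le_mul_right ?_ h0
      linear_combination hlower.trans hupper
  calc (1 - δ) * l2 (projCol Φ Λ (Φ *ᵥ x)) ^ 2
      ≤ (1 - δ) * (δ * (l2 z * l2 x)) :=
        mul_le_mul_of_nonneg_left hupper (sub_pos.2 hΦ.2.1).le
    _ = δ * l2 x * ((1 - δ) * l2 z) := by ring
    _ ≤ δ * l2 x * (δ * l2 x) :=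
        mul_le_mul_of_nonneg_left hz_bound (mul_nonneg hΦ.1.le (l2_nonneg x))
    _ = δ ^ 2 * l2 x ^ 2 := by ring

lemma l2_Amat_mulVec_sq_ge (hΦ : RIP ((supp x).card + Λ.card) Φ δ)
    (hdisj : Disjoint (supp x) Λ) :
    (1 - 2 * δ) * l2 x ^ 2 ≤ (1 - δ) * l2 (Amat Φ Λ *ᵥ x) ^ 2 := by
  have hy := mul_le_mul_of_nonneg_left (hΦ.2.2 x (Nat.le_add_right _ _)).1
    (sub_pos.2 hΦ.2.1).le
  have hp := l2_projCol_mulVec_sq_le hΦ hdisj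
  rw [Amat_mulVec, l2_sub_projCol_sq]
  linear_combination hy + hp

end Residual

theorem stmt13_general {M N : ℕ} (Φ : Matrix (Fin M) (Fin N) ℝ) (δ : ℝ) (Λ : Finset (Fin N))
    (xt : Fin N → ℝ) (hdisj : supp xt ∩ Λ = ∅)
    (hRIP : RIP ((supp xt).card + Λ.card) Φ δ)
    (h : Fin N → ℝ) (hh : h = (Amat Φ Λ)ᵀ.mulVec ((Amat Φ Λ).mulVec xt)) :
    (1 - 2 * δ) / (1 - δ) * l2 xt ≤ l2 (restr (supp xt) h) := by
  have hδ1 : 0 < 1 - δ := sub_pos.2 hRIP.2.1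
  have key : (1 - 2 * δ) * l2 xt * l2 xt ≤ (1 - δ) * l2 (restr (supp xt) h) * l2 xt :=
    calc (1 - 2 * δ) * l2 xt * l2 xt
        ≤ (1 - δ) * l2 (Amat Φ Λ *ᵥ xt) ^ 2 := by
          rw [mul_assoc, ← sq]
          exact l2_Amat_mulVec_sq_ge hRIP (Finset.disjoint_iff_inter_eq_empty.2 hdisj)
      _ = (1 - δ) * dotp (restr (supp xt) h) xt := by
          rw [dotp_restr_supp, hh, dotp_transpose_mulVec, dotp_self]
      _ ≤ (1 - δ) * l2 (restr (supp xt) h) * l2 xt := by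
          rw [mul_assoc]
          exact mul_le_mul_of_nonneg_left (dotp_le_l2_mul_l2 _ _) hδ1.le
  rw [div_mul_eq_mul_div, div_le_iff₀ hδ1, mul_comm (l2 _)]
  rcases (l2_nonneg xt).eq_or_lt with hx | hx
  · rw [← hx, mul_zero]
    exact mul_nonneg hδ1.le (l2_nonneg _)
  · exact le_of_mul_le_mul_right key hx

/-- lower bound on the energy of `h = A_Λᵀ A_Λ x̃` on the support of `x̃`. -/
theorem stmt13 {M N : ℕ} (Φ : Matrix (Fin M) (Fin N) ℝ) (δ : ℝ) (Λ : Finset (Fin N))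
    (xt : Fin N → ℝ) (hdisj : supp xt ∩ Λ = ∅) (hδ : δ < 1 / 2)
    (hRIP : RIP ((supp xt).card + Λ.card) Φ δ)
    (h : Fin N → ℝ) (hh : h = (Amat Φ Λ)ᵀ.mulVec ((Amat Φ Λ).mulVec xt)) :
    (1 - 2 * δ) / (1 - δ) * l2 xt ≤ l2 (restr (supp xt) h) :=
  stmt13_general Φ δ Λ xt hdisj hRIP h hh

end OMP
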